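/- Let m ≥ 1 be an integer and b₁, b₂ real numbers. For every probability measure ξ on [0, 2π], the infimum over all trigonometric polynomials q of degree at most m−1 of ∫₀^{2π} ( q(x) + b₁ sin(mx) + b₂ cos(mx) )² dξ(x) is at most b₁² + b₂². Consequently, the supremum over all probability measures ξ of this infimum equals b₁² + b₂². -/

import Mathlib

open Real MeasureTheory

/-- A trigonometric polynomial of degree at most `n`. -/
def IsTrigPoly (n : ℕ) (q : ℝ → ℝ) : Prop :=
  ∃ (c : ℝ) (α β : ℕ → ℝ), ∀ x, q x =
    c + ∑ j ∈ Finset.Icc 1 n, (α j * Real.cos (j * x) + β j * Real.sin (j * x))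

/-!
Put `R = √(b₁² + b₂²)`. On the `2m` equally spaced points `xᵢ = x₀ + iπ/m` at which
`b₁ sin(mx) + b₂ cos(mx)` takes the values `(-1)ⁱ R`, every trigonometric polynomial `q` of
degree `< m` has vanishing alternating sum `∑ (-1)ⁱ q(xᵢ)`, a geometric sum over a root of
unity `≠ 1`. Hence, for the uniform design on these points,
`∑ (q(xᵢ) + (-1)ⁱ R)² = ∑ q(xᵢ)² + 2m R² ≥ 2m R²` for every such `q`. Conversely `q = 0`
shows that the infimum is at most `R²` for every design, because
`(b₁ sin t + b₂ cos t)² ≤ b₁² + b₂²` pointwise.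
-/

open Finset
open scoped ENNReal

/-- With `ζ = exp(2πi/2m)`, the summand is `exp(ijθ) wⁱ` for `w = ζ^(m+j)`, and `w ≠ 1`
since `0 < m + j < 2m`. -/
lemma sum_neg_one_pow_mul_exp_eq_zero {m j : ℕ} (hj : j < m) (θ : ℝ) :
    ∑ i ∈ range (2 * m), (-1 : ℂ) ^ i * Complex.exp (↑(j * (θ + i * π / m)) * Complex.I) = 0 := by
  have hm : (m : ℂ) ≠ 0 := Nat.cast_ne_zero.2 (by omega)
  set ζ := Complex.exp (2 * π * Complex.I / ↑(2 * m))
  have hζ : IsPrimitiveRoot ζ (2 * m) := Complex.isPrimitiveRoot_exp (2 * m) (by omega)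
  have hw : ζ ^ (m + j) = -Complex.exp (↑(j * π / m) * Complex.I) := by
    rw [← Complex.exp_nat_mul, ← neg_one_mul, ← Complex.exp_pi_mul_I, ← Complex.exp_add]
    congr 1
    push_cast
    field_simp
  have hterm : ∀ i : ℕ, (-1 : ℂ) ^ i * Complex.exp (↑(j * (θ + i * π / m)) * Complex.I)
      = Complex.exp (↑(j * θ) * Complex.I) * (ζ ^ (m + j)) ^ i := by
    intro i
    rw [hw, neg_pow (Complex.exp _), ← Complex.exp_nat_mul, mul_left_comm, ← Complex.exp_add]
    congr 2
    push_cast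
    field_simp
  have hw1 : ζ ^ (m + j) ≠ 1 := hζ.pow_ne_one_of_pos_of_lt (by omega) (by omega)
  have hw2m : (ζ ^ (m + j)) ^ (2 * m) = 1 := by
    rw [← pow_mul, mul_comm, pow_mul, hζ.pow_eq_one, one_pow]
  simp_rw [hterm, ← mul_sum, geom_sum_eq hw1, hw2m, sub_self, zero_div, mul_zero]

lemma sum_neg_one_pow_mul_harmonic_eq_zero {m j : ℕ} (hj : j < m) (a b θ : ℝ) :
    ∑ i ∈ range (2 * m), (-1 : ℝ) ^ i *
      (a * cos (j * (θ + i * π / m)) + b * sin (j * (θ + i * π / m))) = 0 := by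
  have h := congrArg (fun z => ((a - b * Complex.I) * z).re)
    (sum_neg_one_pow_mul_exp_eq_zero hj θ)
  simp only [mul_sum, Complex.re_sum, mul_zero, Complex.zero_re] at h
  rw [← h]
  refine sum_congr rfl fun i _ => ?_
  rw [← Complex.ofReal_one, ← Complex.ofReal_neg, ← Complex.ofReal_pow, Complex.exp_mul_I,
    ← Complex.ofReal_cos, ← Complex.ofReal_sin]
  simp only [Complex.mul_re, Complex.mul_im, Complex.add_re, Complex.add_im, Complex.sub_re,
    Complex.sub_im, Complex.ofReal_re, Complex.ofReal_im, Complex.I_re, Complex.I_im]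
  ring

lemma IsTrigPoly.zero (n : ℕ) : IsTrigPoly n 0 := ⟨0, 0, 0, by simp⟩

lemma IsTrigPoly.periodic {n : ℕ} {q : ℝ → ℝ} (hq : IsTrigPoly n q) :
    Function.Periodic q (2 * π) := by
  obtain ⟨c, α, β, hq⟩ := hq
  intro x
  simp only [hq, mul_add, cos_add_nat_mul_two_pi, sin_add_nat_mul_two_pi]

lemma IsTrigPoly.sum_neg_one_pow_mul_eq_zero {n m : ℕ} {q : ℝ → ℝ} (hq : IsTrigPoly n q)
    (hnm : n < m) (θ : ℝ) : ∑ i ∈ range (2 * m), (-1 : ℝ) ^ i * q (θ + i * π / m) = 0 := by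
  obtain ⟨c, α, β, hq⟩ := hq
  have hconst : ∑ i ∈ range (2 * m), (-1 : ℝ) ^ i * c = 0 := by
    simpa using sum_neg_one_pow_mul_harmonic_eq_zero (j := 0) (by omega) c 0 θ
  simp only [hq, mul_add, mul_sum]
  rw [sum_add_distrib, hconst, zero_add, sum_comm]
  refine sum_eq_zero fun j hj => ?_
  rw [← sum_neg_one_pow_mul_harmonic_eq_zero (m := m) (j := j) ((mem_Icc.1 hj).2.trans_lt hnm) (α j) (β j) θ]
  exact sum_congr rfl fun i _ => by simp only [mul_add]

lemma sum_sq_add_neg_one_pow_mul {N : ℕ} {a : ℕ → ℝ} (r : ℝ)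
    (ha : ∑ i ∈ range N, (-1) ^ i * a i = 0) :
    ∑ i ∈ range N, (a i + (-1) ^ i * r) ^ 2 = ∑ i ∈ range N, a i ^ 2 + N * r ^ 2 := by
  have hexpand : ∀ i, (a i + (-1) ^ i * r) ^ 2 = a i ^ 2 + 2 * r * ((-1) ^ i * a i) + r ^ 2 := by
    intro i
    have hsq : ((-1 : ℝ) ^ i) ^ 2 = 1 := by rw [← pow_mul, mul_comm, pow_mul, neg_one_sq, one_pow]
    linear_combination r ^ 2 * hsq
  simp only [hexpand, sum_add_distrib, ← mul_sum, ha, sum_const, card_range, nsmul_eq_mul]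
  ring

/-- Points that coincide are counted with multiplicity. -/
noncomputable def uniformOnPoints {α : Type*} [MeasurableSpace α] (n : ℕ) (y : ℕ → α) :
    Measure α :=
  (n : ℝ≥0∞)⁻¹ • ∑ i ∈ range n, Measure.dirac (y i)

section UniformOnPoints

variable {α : Type*} [MeasurableSpace α] {n : ℕ} {y : ℕ → α}

lemma isProbabilityMeasure_uniformOnPoints (hn : n ≠ 0) :
    IsProbabilityMeasure (uniformOnPoints n y) := by
  constructor
  simp [uniformOnPoints, ENNReal.inv_mul_cancel (Nat.cast_ne_zero.2 hn)]

lemma uniformOnPoints_apply_eq_zero [MeasurableSingletonClass α] {s : Set α}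
    (hs : ∀ i < n, y i ∉ s) : uniformOnPoints n y s = 0 := by
  simp +contextual [uniformOnPoints, Measure.dirac_apply, hs]

lemma integral_uniformOnPoints [MeasurableSingletonClass α] (f : α → ℝ) :
    ∫ x, f x ∂(uniformOnPoints n y) = (n : ℝ)⁻¹ * ∑ i ∈ range n, f (y i) := by
  rw [uniformOnPoints, integral_smul_measure,
    integral_finsetSum_measure fun i _ => integrable_dirac enorm_lt_top]
  simp [integral_dirac]

end UniformOnPoints

noncomputable def trigApproxError (n m : ℕ) (b₁ b₂ : ℝ) (ξ : Measure ℝ) : ℝ :=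
  sInf {v : ℝ | ∃ q : ℝ → ℝ, IsTrigPoly n q ∧
    v = ∫ x, (q x + b₁ * sin (m * x) + b₂ * cos (m * x)) ^ 2 ∂ξ}

lemma sq_mul_sin_add_mul_cos_le (b₁ b₂ t : ℝ) :
    (b₁ * sin t + b₂ * cos t) ^ 2 ≤ b₁ ^ 2 + b₂ ^ 2 := by
  nlinarith [sin_sq_add_cos_sq t, sq_nonneg (b₁ * cos t - b₂ * sin t)]

lemma trigApproxError_le (n m : ℕ) (b₁ b₂ : ℝ) (ξ : Measure ℝ) [IsProbabilityMeasure ξ] :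
    trigApproxError n m b₁ b₂ ξ ≤ b₁ ^ 2 + b₂ ^ 2 := by
  refine le_trans (csInf_le ⟨0, ?_⟩ ⟨0, IsTrigPoly.zero n, rfl⟩) ?_
  · rintro v ⟨q, -, rfl⟩
    exact integral_nonneg fun x => sq_nonneg _
  calc ∫ x, ((0 : ℝ → ℝ) x + b₁ * sin (m * x) + b₂ * cos (m * x)) ^ 2 ∂ξ
      ≤ ∫ _, b₁ ^ 2 + b₂ ^ 2 ∂ξ := by
        refine integral_mono_of_nonneg (ae_of_all _ fun x => sq_nonneg _) (integrable_const _)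
          (ae_of_all _ fun x => ?_)
        simpa using sq_mul_sin_add_mul_cos_le b₁ b₂ (m * x)
    _ = b₁ ^ 2 + b₂ ^ 2 := by simp

section Design

variable (m : ℕ) (b₁ b₂ : ℝ)

noncomputable def designNode (i : ℕ) : ℝ :=
  (π / 2 - Complex.arg (b₁ + b₂ * Complex.I)) / m + i * π / m

lemma mul_sin_add_mul_cos_designNode (hm : m ≠ 0) (i : ℕ) :
    b₁ * sin (m * designNode m b₁ b₂ i) + b₂ * cos (m * designNode m b₁ b₂ i)
      = (-1) ^ i * ‖(b₁ + b₂ * Complex.I : ℂ)‖ := by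
  set z : ℂ := b₁ + b₂ * Complex.I
  have hb₁ : b₁ = ‖z‖ * cos (Complex.arg z) := by simp [Complex.norm_mul_cos_arg, z]
  have hb₂ : b₂ = ‖z‖ * sin (Complex.arg z) := by simp [Complex.norm_mul_sin_arg, z]
  have hnode : m * designNode m b₁ b₂ i = (π / 2 - Complex.arg z) + i * π := by
    simp only [designNode, z]
    field_simp
  rw [hnode, sin_add_nat_mul_pi, cos_add_nat_mul_pi, sin_pi_div_two_sub, cos_pi_div_two_sub]
  linear_combination (-1) ^ i * cos (Complex.arg z) * hb₁ + (-1) ^ i * sin (Complex.arg z) * hb₂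
    + (-1) ^ i * ‖z‖ * sin_sq_add_cos_sq (Complex.arg z)

noncomputable def designMeasure : Measure ℝ :=
  uniformOnPoints (2 * m) fun i => toIcoMod two_pi_pos 0 (designNode m b₁ b₂ i)

lemma isProbabilityMeasure_designMeasure (hm : m ≠ 0) :
    IsProbabilityMeasure (designMeasure m b₁ b₂) :=
  isProbabilityMeasure_uniformOnPoints (by omega)

lemma designMeasure_compl_Icc : designMeasure m b₁ b₂ (Set.Icc 0 (2 * π))ᶜ = 0 :=
  uniformOnPoints_apply_eq_zero fun i _ hi => hi (Set.Ico_subset_Icc_self (by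
    simpa using toIcoMod_mem_Ico two_pi_pos 0 (designNode m b₁ b₂ i)))

lemma le_integral_designMeasure {n : ℕ} (hnm : n < m) {q : ℝ → ℝ} (hq : IsTrigPoly n q) :
    b₁ ^ 2 + b₂ ^ 2 ≤
      ∫ x, (q x + b₁ * sin (m * x) + b₂ * cos (m * x)) ^ 2 ∂(designMeasure m b₁ b₂) := by
  have hm : m ≠ 0 := by omega
  have hF : Function.Periodic (fun x => (q x + b₁ * sin (m * x) + b₂ * cos (m * x)) ^ 2)
      (2 * π) := fun x => by
    simp only [hq.periodic x, mul_add, sin_add_nat_mul_two_pi, cos_add_nat_mul_two_pi]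
  have hnodes : ∀ i, let y := toIcoMod two_pi_pos 0 (designNode m b₁ b₂ i)
      (q y + b₁ * sin (m * y) + b₂ * cos (m * y)) ^ 2
        = (q (designNode m b₁ b₂ i) + (-1) ^ i * ‖(b₁ + b₂ * Complex.I : ℂ)‖) ^ 2 := fun i => by
    rw [← self_sub_toIcoDiv_zsmul]
    refine (hF.sub_zsmul_eq _).trans ?_
    rw [add_assoc, mul_sin_add_mul_cos_designNode m b₁ b₂ hm]
  have hsum := sum_sq_add_neg_one_pow_mul (a := fun i => q (designNode m b₁ b₂ i))
    ‖(b₁ + b₂ * Complex.I : ℂ)‖ (hq.sum_neg_one_pow_mul_eq_zero hnm _)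
  have hN : ((2 * m : ℕ) : ℝ) ≠ 0 := by positivity
  rw [designMeasure, integral_uniformOnPoints]
  simp only [hnodes, hsum, mul_add, inv_mul_cancel_left₀ hN, Complex.sq_norm,
    Complex.normSq_add_mul_I]
  exact le_add_of_nonneg_left (by positivity)

lemma trigApproxError_designMeasure {n : ℕ} (hnm : n < m) :
    trigApproxError n m b₁ b₂ (designMeasure m b₁ b₂) = b₁ ^ 2 + b₂ ^ 2 := by
  have := isProbabilityMeasure_designMeasure m b₁ b₂ (by omega)
  refine le_antisymm (trigApproxError_le ..) (le_csInf ⟨_, 0, IsTrigPoly.zero n, rfl⟩ ?_)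
  rintro v ⟨q, hq, rfl⟩
  exact le_integral_designMeasure m b₁ b₂ hnm hq

end Design

theorem T_optimal_value (m : ℕ) (hm : 1 ≤ m) (b₁ b₂ : ℝ) :
    (∀ ξ : Measure ℝ, IsProbabilityMeasure ξ → ξ (Set.Icc 0 (2 * Real.pi))ᶜ = 0 →
      sInf {v : ℝ | ∃ q : ℝ → ℝ, IsTrigPoly (m - 1) q ∧
          v = ∫ x, (q x + b₁ * Real.sin (m * x) + b₂ * Real.cos (m * x)) ^ 2 ∂ξ}
        ≤ b₁ ^ 2 + b₂ ^ 2) ∧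
    sSup {w : ℝ | ∃ ξ : Measure ℝ, IsProbabilityMeasure ξ ∧ ξ (Set.Icc 0 (2 * Real.pi))ᶜ = 0 ∧
        w = sInf {v : ℝ | ∃ q : ℝ → ℝ, IsTrigPoly (m - 1) q ∧
          v = ∫ x, (q x + b₁ * Real.sin (m * x) + b₂ * Real.cos (m * x)) ^ 2 ∂ξ}}
      = b₁ ^ 2 + b₂ ^ 2 := by
  have upper : ∀ ξ : Measure ℝ, IsProbabilityMeasure ξ →
      trigApproxError (m - 1) m b₁ b₂ ξ ≤ b₁ ^ 2 + b₂ ^ 2 := fun ξ _ => trigApproxError_le ..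
  refine ⟨fun ξ hξ _ => upper ξ hξ, IsGreatest.csSup_eq ⟨?_, ?_⟩⟩
  · exact ⟨designMeasure m b₁ b₂, isProbabilityMeasure_designMeasure m b₁ b₂ (by omega),
      designMeasure_compl_Icc m b₁ b₂, (trigApproxError_designMeasure m b₁ b₂ (by omega)).symm⟩
  · rintro w ⟨ξ, hξ, -, rfl⟩
    exact upper ξ hξ
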